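/- arXiv:2001.02711 — 2 statements merged into one kernel-verified Lean document; each statement's English description precedes it below -/
import Mathlib

section
/- Let f : ℝ → ℝ be nonnegative, integrable, supported in the interval I = (π/4, 3π/4), with total mass ρ₊ = ∫_I f dφ > 0 and mean φ₊ = (1/ρ₊)∫_I φ f dφ. Then the double integral ∫_I ∫_I |sin(φ-φ*)| f(φ) f(φ*) (φ-φ*)² dφ* dφ is bounded below by (2√ρ₊/π)·V^{3/2}, where V = ∫_I (φ-φ₊)² f dφ. -/
/-!
Expanding the square and using that `φ₊` is the mean gives
`∫∫ (φ - φ*)² f(φ) f(φ*) = 2 ρ₊ V`. Hölder's inequality with exponents `3/2` and `3` for the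
weight `f(φ) f(φ*)`, of total mass `ρ₊²`, bounds `(2 ρ₊ V)^{3/2}` by `ρ₊ ∫∫ |φ - φ*|³ f f`.
Finally `|φ - φ*| ≤ π/2` on `I`, where `|sin t| ≥ (2/π)|t|`.
-/

open MeasureTheory Set

theorem two_div_pi_mul_abs_le_abs_sin {t : ℝ} (ht : |t| ≤ Real.pi / 2) :
    2 / Real.pi * |t| ≤ |Real.sin t| := by
  rw [Real.abs_sin_eq_sin_abs_of_abs_le_pi (ht.trans (by linarith [Real.pi_pos]))]
  exact Real.mul_le_sin (abs_nonneg t) ht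

theorem integral_mul_le_integral_rpow_mul_rpow {α : Type*} [MeasurableSpace α] {μ : Measure α}
    {p q : ℝ} (hpq : p.HolderConjugate q) {h w : α → ℝ} (hh : 0 ≤ h) (hw : 0 ≤ w)
    (hh_meas : AEStronglyMeasurable h μ) (hw_int : Integrable w μ)
    (hhw_int : Integrable (fun a => h a ^ p * w a) μ) :
    ∫ a, h a * w a ∂μ ≤ (∫ a, h a ^ p * w a ∂μ) ^ (1 / p) * (∫ a, w a ∂μ) ^ (1 / q) := by
  -- Hölder's inequality for `h * w ^ (1 / p)` and `w ^ (1 / q)`.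
  have hF : ∀ a, (h a * w a ^ (1 / p)) ^ p = h a ^ p * w a := fun a => by
    rw [Real.mul_rpow (hh a) (Real.rpow_nonneg (hw a) _), ← Real.rpow_mul (hw a),
      one_div_mul_cancel hpq.ne_zero, Real.rpow_one]
  have hG : ∀ a, (w a ^ (1 / q)) ^ q = w a := fun a => by
    rw [← Real.rpow_mul (hw a), one_div_mul_cancel hpq.symm.ne_zero, Real.rpow_one]
  have hFG : ∀ a, h a * w a ^ (1 / p) * w a ^ (1 / q) = h a * w a := fun a => by
    rw [mul_assoc, ← Real.rpow_add' (hw a) (by rw [hpq.one_div_add_one_div]; norm_num),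
      hpq.one_div_add_one_div, div_one, Real.rpow_one]
  have hp : ENNReal.ofReal p ≠ 0 := by simpa using hpq.pos
  have hq : ENNReal.ofReal q ≠ 0 := by simpa using hpq.symm.pos
  have hF_mem : MemLp (fun a => h a * w a ^ (1 / p)) (ENNReal.ofReal p) μ := by
    refine (integrable_norm_rpow_iff ?_ hp ENNReal.ofReal_ne_top).1 ?_
    · exact hh_meas.mul ((hw_int.1.aemeasurable.pow_const _).aestronglyMeasurable)
    · refine hhw_int.congr (ae_of_all _ fun a => ?_)
      simp only [ENNReal.toReal_ofReal hpq.nonneg, Real.norm_of_nonneg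
        (mul_nonneg (hh a) (Real.rpow_nonneg (hw a) _)), hF]
  have hG_mem : MemLp (fun a => w a ^ (1 / q)) (ENNReal.ofReal q) μ := by
    refine (integrable_norm_rpow_iff ?_ hq ENNReal.ofReal_ne_top).1 ?_
    · exact (hw_int.1.aemeasurable.pow_const _).aestronglyMeasurable
    · refine hw_int.congr (ae_of_all _ fun a => ?_)
      simp only [ENNReal.toReal_ofReal hpq.symm.nonneg, Real.norm_of_nonneg
        (Real.rpow_nonneg (hw a) _), hG]
  have := integral_mul_le_Lp_mul_Lq_of_nonneg hpq
    (ae_of_all _ fun a => mul_nonneg (hh a) (Real.rpow_nonneg (hw a) _))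
    (ae_of_all _ fun a => Real.rpow_nonneg (hw a) _) hF_mem hG_mem
  simpa only [hF, hG, hFG] using this

theorem rpow_integral_mul_le_integral_rpow_mul {α : Type*} [MeasurableSpace α] {μ : Measure α}
    {p : ℝ} (hp : 1 < p) {h w : α → ℝ} (hh : 0 ≤ h) (hw : 0 ≤ w)
    (hh_meas : AEStronglyMeasurable h μ) (hw_int : Integrable w μ)
    (hhw_int : Integrable (fun a => h a ^ p * w a) μ) :
    (∫ a, h a * w a ∂μ) ^ p ≤ (∫ a, w a ∂μ) ^ (p - 1) * ∫ a, h a ^ p * w a ∂μ := by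
  have hpq := Real.HolderConjugate.conjExponent hp
  have hA : 0 ≤ ∫ a, h a ^ p * w a ∂μ :=
    integral_nonneg fun a => mul_nonneg (Real.rpow_nonneg (hh a) _) (hw a)
  have hB : 0 ≤ ∫ a, w a ∂μ := integral_nonneg hw
  calc (∫ a, h a * w a ∂μ) ^ p
      ≤ ((∫ a, h a ^ p * w a ∂μ) ^ (1 / p) * (∫ a, w a ∂μ) ^ (1 / p.conjExponent)) ^ p :=
        Real.rpow_le_rpow (integral_nonneg fun a => mul_nonneg (hh a) (hw a))
          (integral_mul_le_integral_rpow_mul_rpow hpq hh hw hh_meas hw_int hhw_int) hpq.nonneg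
    _ = (∫ a, w a ∂μ) ^ (p - 1) * ∫ a, h a ^ p * w a ∂μ := by
        rw [Real.mul_rpow (by positivity) (by positivity), ← Real.rpow_mul hA, ← Real.rpow_mul hB,
          one_div_mul_cancel hpq.ne_zero, Real.rpow_one, mul_comm, one_div_mul_eq_div,
          hpq.div_conj_eq_sub_one]

theorem integral_prod_sq_sub_mul_mul {μ : Measure ℝ} [SFinite μ] {g : ℝ → ℝ} (c : ℝ)
    (hg : Integrable g μ) (hg₁ : Integrable (fun x => (x - c) * g x) μ)
    (hg₂ : Integrable (fun x => (x - c) ^ 2 * g x) μ) :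
    ∫ p : ℝ × ℝ, (p.1 - p.2) ^ 2 * (g p.1 * g p.2) ∂μ.prod μ =
      2 * (∫ x, g x ∂μ) * (∫ x, (x - c) ^ 2 * g x ∂μ) - 2 * (∫ x, (x - c) * g x ∂μ) ^ 2 := by
  have hsplit : (fun p : ℝ × ℝ => (p.1 - p.2) ^ 2 * (g p.1 * g p.2)) = fun p =>
      ((p.1 - c) ^ 2 * g p.1) * g p.2 + g p.1 * ((p.2 - c) ^ 2 * g p.2)
        - 2 * (((p.1 - c) * g p.1) * ((p.2 - c) * g p.2)) := by
    funext p; ring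
  rw [hsplit, integral_sub, integral_add, integral_const_mul,
    integral_prod_mul (fun x => (x - c) ^ 2 * g x) g,
    integral_prod_mul g (fun x => (x - c) ^ 2 * g x),
    integral_prod_mul (fun x => (x - c) * g x) (fun x => (x - c) * g x)]
  · ring
  · exact hg₂.mul_prod hg
  · exact hg.mul_prod hg₂
  · exact (hg₂.mul_prod hg).add (hg.mul_prod hg₂)
  · exact (hg₁.mul_prod hg₁).const_mul 2

theorem MeasureTheory.IntegrableOn.continuous_mul_restrict_Ioo {a b : ℝ} {f g : ℝ → ℝ}
    (hf : IntegrableOn f (Ioo a b)) (hg : Continuous g) :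
    Integrable (fun x => g x * f x) (volume.restrict (Ioo a b)) :=
  hf.continuousOn_mul_of_subset hg.continuousOn isCompact_Icc measurableSet_Ioo Ioo_subset_Icc_self

theorem MeasureTheory.IntegrableOn.continuous_mul_prod_restrict_Ioo {a b : ℝ} {f : ℝ → ℝ}
    {g : ℝ × ℝ → ℝ} (hf : IntegrableOn f (Ioo a b)) (hg : Continuous g) :
    Integrable (fun p => g p * (f p.1 * f p.2))
      ((volume.restrict (Ioo a b)).prod (volume.restrict (Ioo a b))) := by
  have hμ : (volume.restrict (Ioo a b)).prod (volume.restrict (Ioo a b)) =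
      volume.restrict (Ioo a b ×ˢ Ioo a b) := by
    rw [Measure.volume_eq_prod]; exact Measure.prod_restrict _ _
  rw [hμ]
  refine IntegrableOn.continuousOn_mul_of_subset hg.continuousOn ?_
    (isCompact_Icc.prod isCompact_Icc) (measurableSet_Ioo.prod measurableSet_Ioo)
    (prod_mono Ioo_subset_Icc_self Ioo_subset_Icc_self)
  rw [IntegrableOn, ← hμ]
  exact hf.mul_prod hf

theorem sq_rpow_three_halves (t : ℝ) : (t ^ 2) ^ (3 / 2 : ℝ) = |t| * t ^ 2 := by
  rw [← sq_abs, ← Real.rpow_natCast, ← Real.rpow_mul (abs_nonneg t),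
    show ((2 : ℕ) : ℝ) * (3 / 2) = 1 + 2 by norm_num, Real.rpow_add' (abs_nonneg t) (by norm_num),
    Real.rpow_one]
  norm_num

theorem two_div_pi_mul_integral_le_integral_integral_abs_sin {a b : ℝ} (hab : b - a ≤ Real.pi / 2)
    {f : ℝ → ℝ} (hf_nonneg : ∀ x, 0 ≤ f x) (hf_int : IntegrableOn f (Ioo a b)) :
    2 / Real.pi * ∫ p, ((p.1 - p.2) ^ 2) ^ (3 / 2 : ℝ) * (f p.1 * f p.2)
        ∂(volume.restrict (Ioo a b)).prod (volume.restrict (Ioo a b)) ≤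
      ∫ x in Ioo a b, ∫ y in Ioo a b, |Real.sin (x - y)| * f x * f y * (x - y) ^ 2 := by
  have hsin_int : Integrable (fun p : ℝ × ℝ => |Real.sin (p.1 - p.2)| * f p.1 * f p.2 *
      (p.1 - p.2) ^ 2) ((volume.restrict (Ioo a b)).prod (volume.restrict (Ioo a b))) :=
    (hf_int.continuous_mul_prod_restrict_Ioo
      (g := fun p => |Real.sin (p.1 - p.2)| * (p.1 - p.2) ^ 2) (by fun_prop)).congr
      (ae_of_all _ fun p => by ring)
  rw [← integral_const_mul, ← integral_prod _ hsin_int]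
  refine integral_mono_ae ((hf_int.continuous_mul_prod_restrict_Ioo
    (g := fun p => ((p.1 - p.2) ^ 2) ^ (3 / 2 : ℝ)) (by fun_prop (disch := norm_num))).const_mul _)
    hsin_int ?_
  rw [Measure.prod_restrict]
  filter_upwards [ae_restrict_mem (measurableSet_Ioo.prod measurableSet_Ioo)] with p ⟨hx, hy⟩
  have hdist : |p.1 - p.2| ≤ Real.pi / 2 := by
    rw [abs_le]; constructor <;> linarith [hx.1, hx.2, hy.1, hy.2]
  calc 2 / Real.pi * (((p.1 - p.2) ^ 2) ^ (3 / 2 : ℝ) * (f p.1 * f p.2))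
      = 2 / Real.pi * |p.1 - p.2| * ((p.1 - p.2) ^ 2 * (f p.1 * f p.2)) := by
        rw [sq_rpow_three_halves]; ring
    _ ≤ |Real.sin (p.1 - p.2)| * ((p.1 - p.2) ^ 2 * (f p.1 * f p.2)) := by
        gcongr
        · exact mul_nonneg (sq_nonneg _) (mul_nonneg (hf_nonneg _) (hf_nonneg _))
        · exact two_div_pi_mul_abs_le_abs_sin hdist
    _ = |Real.sin (p.1 - p.2)| * f p.1 * f p.2 * (p.1 - p.2) ^ 2 := by ring

theorem sqrt_mul_rpow_three_halves_le {ρ V J : ℝ} (hρ : 0 < ρ) (hV : 0 ≤ V)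
    (h : (2 * ρ * V) ^ (3 / 2 : ℝ) ≤ (ρ ^ 2) ^ (3 / 2 - 1 : ℝ) * J) :
    Real.sqrt ρ * V ^ (3 / 2 : ℝ) ≤ J := by
  have hρ2 : (ρ ^ 2) ^ (3 / 2 - 1 : ℝ) = ρ := by
    rw [show (3 / 2 - 1 : ℝ) = 1 / 2 by norm_num, ← Real.sqrt_eq_rpow, Real.sqrt_sq hρ.le]
  have hρ32 : ρ ^ (3 / 2 : ℝ) = ρ * Real.sqrt ρ := by
    rw [show (3 / 2 : ℝ) = 1 + 1 / 2 by norm_num, Real.rpow_add hρ, Real.rpow_one,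
      Real.sqrt_eq_rpow]
  refine le_of_mul_le_mul_left ?_ hρ
  calc ρ * (Real.sqrt ρ * V ^ (3 / 2 : ℝ)) = (ρ * V) ^ (3 / 2 : ℝ) := by
        rw [Real.mul_rpow hρ.le hV, hρ32, mul_assoc]
    _ ≤ (2 * ρ * V) ^ (3 / 2 : ℝ) := by gcongr; nlinarith [mul_nonneg hρ.le hV]
    _ ≤ ρ * J := by rwa [hρ2] at h

theorem stmt_3_general (f : ℝ → ℝ) (hf_nonneg : ∀ x, 0 ≤ f x)
    (hf_int : IntegrableOn f (Ioo (Real.pi/4) (3*Real.pi/4)))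
    (ρ : ℝ) (hρ_def : ρ = ∫ x in Ioo (Real.pi/4) (3*Real.pi/4), f x) (hρ : 0 < ρ)
    (φp : ℝ) (hφp : φp = (∫ x in Ioo (Real.pi/4) (3*Real.pi/4), x * f x) / ρ)
    (V : ℝ) (hV : V = ∫ x in Ioo (Real.pi/4) (3*Real.pi/4), (x - φp)^2 * f x) :
    (2 * Real.sqrt ρ / Real.pi) * V ^ ((3:ℝ)/2) ≤
      ∫ x in Ioo (Real.pi/4) (3*Real.pi/4), ∫ y in Ioo (Real.pi/4) (3*Real.pi/4),
        |Real.sin (x - y)| * f x * f y * (x - y)^2 := by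
  set I := Ioo (Real.pi/4) (3*Real.pi/4)
  have hmean : ∫ x in I, (x - φp) * f x = 0 := by
    simp_rw [sub_mul]
    rw [integral_sub (hf_int.continuous_mul_restrict_Ioo (g := fun x => x) continuous_id)
        (hf_int.const_mul φp),
      integral_const_mul, ← hρ_def, hφp, div_mul_cancel₀ _ hρ.ne', sub_self]
  have hvar : ∫ p, (p.1 - p.2) ^ 2 * (f p.1 * f p.2) ∂(volume.restrict I).prod (volume.restrict I)
      = 2 * ρ * V := by
    rw [integral_prod_sq_sub_mul_mul φp hf_int (hf_int.continuous_mul_restrict_Ioo (by fun_prop))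
      (hf_int.continuous_mul_restrict_Ioo (by fun_prop)), hmean, ← hρ_def, ← hV]
    ring
  have hmass : ∫ p, f p.1 * f p.2 ∂(volume.restrict I).prod (volume.restrict I) = ρ ^ 2 := by
    rw [integral_prod_mul f f, ← hρ_def, sq]
  have hpow := rpow_integral_mul_le_integral_rpow_mul (p := 3 / 2) (by norm_num)
    (h := fun p : ℝ × ℝ => (p.1 - p.2) ^ 2) (fun p => sq_nonneg _)
    (fun p => mul_nonneg (hf_nonneg p.1) (hf_nonneg p.2)) (by fun_prop) (hf_int.mul_prod hf_int)
    (hf_int.continuous_mul_prod_restrict_Ioo (by fun_prop (disch := norm_num)))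
  rw [hvar, hmass] at hpow
  have hab : 3 * Real.pi / 4 - Real.pi / 4 ≤ Real.pi / 2 := by linarith
  calc 2 * Real.sqrt ρ / Real.pi * V ^ (3 / 2 : ℝ)
      = 2 / Real.pi * (Real.sqrt ρ * V ^ (3 / 2 : ℝ)) := by ring
    _ ≤ 2 / Real.pi * ∫ p, ((p.1 - p.2) ^ 2) ^ (3 / 2 : ℝ) * (f p.1 * f p.2)
          ∂(volume.restrict I).prod (volume.restrict I) := by
        gcongr
        exact sqrt_mul_rpow_three_halves_le hρ (hV ▸ integral_nonneg fun x =>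
          mul_nonneg (sq_nonneg _) (hf_nonneg x)) hpow
    _ ≤ _ := two_div_pi_mul_integral_le_integral_integral_abs_sin hab hf_nonneg hf_int

theorem stmt_3 (f : ℝ → ℝ) (hf_nonneg : ∀ x, 0 ≤ f x)
    (hf_int : IntegrableOn f (Ioo (Real.pi/4) (3*Real.pi/4)))
    (hf_supp : ∀ x ∉ Ioo (Real.pi/4) (3*Real.pi/4), f x = 0)
    (ρ : ℝ) (hρ_def : ρ = ∫ x in Ioo (Real.pi/4) (3*Real.pi/4), f x) (hρ : 0 < ρ)
    (φp : ℝ) (hφp : φp = (∫ x in Ioo (Real.pi/4) (3*Real.pi/4), x * f x) / ρ)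
    (V : ℝ) (hV : V = ∫ x in Ioo (Real.pi/4) (3*Real.pi/4), (x - φp)^2 * f x) :
    (2 * Real.sqrt ρ / Real.pi) * V ^ ((3:ℝ)/2) ≤
      ∫ x in Ioo (Real.pi/4) (3*Real.pi/4), ∫ y in Ioo (Real.pi/4) (3*Real.pi/4),
        |Real.sin (x - y)| * f x * f y * (x - y)^2 :=
  stmt_3_general f hf_nonneg hf_int ρ hρ_def hρ φp hφp V hV
end

section
/- Let f, g be probability measures on the flat torus 𝕋¹ = ℝ/2πℤ, both supported in 𝕋¹₊ ∪ 𝕋¹₋ where 𝕋¹₊ = (π/4, 3π/4) and 𝕋¹₋ = (-3π/4, -π/4), and suppose f(𝕋¹₊) = g(𝕋¹₊) and f(𝕋¹₋) = g(𝕋¹₋). Then the squared Wasserstein-2 distance on 𝕋¹ (with cost the squared geodesic distance dist_{𝕋¹}) splits: W₂^{𝕋¹}(f,g)² = W₂^{𝕋¹₊}(f|_{𝕋¹₊}, g|_{𝕋¹₊})² + W₂^{𝕋¹₋}(f|_{𝕋¹₋}, g|_{𝕋¹₋})², where the restricted distances use the same cost restricted to each interval. -/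
/-!
Points of the same group are at distance at most `π/2`, points of different groups at distance
at least `π/2`. Gluing plans of the two groups gives `≤`. Conversely, take any plan `γ` from `f`
to `g`. Since `f(𝕋¹₊) = g(𝕋¹₊)`, `γ` moves as much mass from `𝕋¹₊` to `𝕋¹₋` as back, so the
mass leaving `𝕋¹₊` can be coupled, independently and rescaled, with the mass arriving in `𝕋¹₊`.
The result is a plan within `𝕋¹₊` that pays at most `π²/4` per unit where `γ` paid at least
`π²/4`; likewise for `𝕋¹₋`, and the four pieces of `γ` cost at most `γ` in total.
-/

open MeasureTheory Set

/-- Squared Wasserstein-2 distance on the flat torus of length `2π`,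
with cost the squared geodesic distance, as an infimum over transference plans. -/
noncomputable def W2sq (μ ν : Measure (AddCircle (2*Real.pi))) : ENNReal :=
  ⨅ (γ : Measure (AddCircle (2*Real.pi) × AddCircle (2*Real.pi)))
    (_ : γ.fst = μ) (_ : γ.snd = ν), ∫⁻ p, edist p.1 p.2 ^ 2 ∂γ

/-- The upper group `𝕋¹₊ = (π/4, 3π/4)` on the torus. -/
def Tplus : Set (AddCircle (2*Real.pi)) :=
  (fun x : ℝ => (x : AddCircle (2*Real.pi))) '' Ioo (Real.pi/4) (3*Real.pi/4)

/-- The lower group `𝕋¹₋ = (-3π/4, -π/4)` on the torus. -/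
def Tminus : Set (AddCircle (2*Real.pi)) :=
  (fun x : ℝ => (x : AddCircle (2*Real.pi))) '' Ioo (-(3*Real.pi/4)) (-(Real.pi/4))

open scoped ENNReal

namespace MeasureTheory.Measure

variable {α β : Type*} [MeasurableSpace α] [MeasurableSpace β]

lemma fst_smul (c : ℝ≥0∞) (ρ : Measure (α × β)) : (c • ρ).fst = c • ρ.fst :=
  Measure.map_smul c ρ Prod.fst

lemma snd_smul (c : ℝ≥0∞) (ρ : Measure (α × β)) : (c • ρ).snd = c • ρ.snd :=
  Measure.map_smul c ρ Prod.snd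

lemma fst_prod_eq_smul (μ : Measure α) (ν : Measure β) [SFinite ν] :
    (μ.prod ν).fst = ν univ • μ := by
  ext s hs
  rw [fst_apply hs, ← prod_univ, prod_prod, smul_apply, smul_eq_mul, mul_comm]

lemma snd_prod_eq_smul (μ : Measure α) (ν : Measure β) [SFinite ν] :
    (μ.prod ν).snd = μ univ • ν := by
  ext s hs
  rw [snd_apply hs, ← univ_prod, prod_prod, smul_apply, smul_eq_mul]

lemma fst_restrict_prod_univ (ρ : Measure (α × β)) {s : Set α} (hs : MeasurableSet s) :
    (ρ.restrict (s ×ˢ univ)).fst = ρ.fst.restrict s := by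
  ext t ht
  rw [fst_apply ht, restrict_apply (measurable_fst ht), restrict_apply ht,
    fst_apply (ht.inter hs), prod_univ, preimage_inter]

lemma snd_restrict_univ_prod (ρ : Measure (α × β)) {s : Set β} (hs : MeasurableSet s) :
    (ρ.restrict (univ ×ˢ s)).snd = ρ.snd.restrict s := by
  ext t ht
  rw [snd_apply ht, restrict_apply (measurable_snd ht), restrict_apply ht,
    snd_apply (ht.inter hs), univ_prod, preimage_inter]

lemma inv_smul_smul_of_measure_univ {μ : Measure α} {c : ℝ≥0∞} (hμ : μ univ = c) (hc : c ≠ ∞) :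
    c⁻¹ • c • μ = μ := by
  rcases eq_or_ne c 0 with rfl | hc₀
  · rw [measure_univ_eq_zero.mp hμ, smul_zero, smul_zero]
  · rw [smul_smul, ENNReal.inv_mul_cancel hc₀ hc, one_smul]

lemma restrict_add_restrict_of_measure_compl_union {μ : Measure α} {s t : Set α}
    (hst : Disjoint s t) (ht : MeasurableSet t) (h : μ (s ∪ t)ᶜ = 0) :
    μ.restrict s + μ.restrict t = μ := by
  rw [← restrict_union hst ht]
  exact restrict_eq_self_of_ae_mem (mem_ae_iff.mpr h)

end MeasureTheory.Measure

section Reroute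

variable {α : Type*} [MeasurableSpace α] {γ : Measure (α × α)} {S T : Set α}

lemma restrict_prod_univ_eq_add (hS : MeasurableSet S) (hT : MeasurableSet T)
    (hST : Disjoint S T) (hsnd : γ.snd (S ∪ T)ᶜ = 0) :
    γ.restrict (S ×ˢ univ) = γ.restrict (S ×ˢ S) + γ.restrict (S ×ˢ T) := by
  have hnull : γ (S ×ˢ univ \ S ×ˢ (S ∪ T)) = 0 := by
    rw [Measure.snd_apply (hS.union hT).compl] at hsnd
    exact measure_mono_null (fun p hp h ↦ hp.2 ⟨hp.1.1, h⟩) hsnd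
  have hempty : S ×ˢ (S ∪ T) \ S ×ˢ univ = ∅ := sdiff_eq_empty.mpr (prod_mono_right (subset_univ _))
  rw [Measure.restrict_congr_set (ae_eq_set.mpr ⟨hnull, by rw [hempty, measure_empty]⟩),
    prod_union, Measure.restrict_union (disjoint_prod.mpr (Or.inr hST)) (hS.prod hT)]

lemma restrict_univ_prod_eq_add (hS : MeasurableSet S) (hT : MeasurableSet T)
    (hST : Disjoint S T) (hfst : γ.fst (S ∪ T)ᶜ = 0) :
    γ.restrict (univ ×ˢ S) = γ.restrict (S ×ˢ S) + γ.restrict (T ×ˢ S) := by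
  have hnull : γ (univ ×ˢ S \ (S ∪ T) ×ˢ S) = 0 := by
    rw [Measure.fst_apply (hS.union hT).compl] at hfst
    exact measure_mono_null (fun p hp h ↦ hp.2 ⟨h, hp.1.2⟩) hfst
  have hempty : (S ∪ T) ×ˢ S \ univ ×ˢ S = ∅ := sdiff_eq_empty.mpr (prod_mono_left (subset_univ _))
  rw [Measure.restrict_congr_set (ae_eq_set.mpr ⟨hnull, by rw [hempty, measure_empty]⟩),
    union_prod, Measure.restrict_union (disjoint_prod.mpr (Or.inl hST)) (hT.prod hS)]

lemma measure_prod_eq_of_fst_eq_snd [IsFiniteMeasure γ] (hS : MeasurableSet S)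
    (hT : MeasurableSet T) (hST : Disjoint S T) (hfst : γ.fst (S ∪ T)ᶜ = 0)
    (hsnd : γ.snd (S ∪ T)ᶜ = 0) (h : γ.fst S = γ.snd S) :
    γ (S ×ˢ T) = γ (T ×ˢ S) := by
  rw [Measure.fst_apply hS, ← prod_univ, ← γ.restrict_apply_univ (S ×ˢ univ),
    restrict_prod_univ_eq_add hS hT hST hsnd, Measure.snd_apply hS, ← univ_prod,
    ← γ.restrict_apply_univ (univ ×ˢ S), restrict_univ_prod_eq_add hS hT hST hfst] at h
  simp only [Measure.add_apply, Measure.restrict_apply_univ] at h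
  exact (ENNReal.add_right_inj (measure_ne_top _ _)).mp h

noncomputable def reroutedPlan (γ : Measure (α × α)) (S T : Set α) : Measure (α × α) :=
  γ.restrict (S ×ˢ S) +
    (γ (S ×ˢ T))⁻¹ • ((γ.restrict (S ×ˢ T)).fst.prod (γ.restrict (T ×ˢ S)).snd)

lemma fst_reroutedPlan [IsFiniteMeasure γ] (hS : MeasurableSet S) (hT : MeasurableSet T)
    (hST : Disjoint S T) (hsnd : γ.snd (S ∪ T)ᶜ = 0) (hbal : γ (S ×ˢ T) = γ (T ×ˢ S)) :
    (reroutedPlan γ S T).fst = γ.fst.restrict S := by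
  rw [reroutedPlan, Measure.fst_add, Measure.fst_smul, Measure.fst_prod_eq_smul,
    Measure.snd_univ, Measure.restrict_apply_univ, ← hbal,
    Measure.inv_smul_smul_of_measure_univ
      (by rw [Measure.fst_univ, Measure.restrict_apply_univ]) (measure_ne_top _ _),
    ← Measure.fst_add, ← restrict_prod_univ_eq_add hS hT hST hsnd,
    Measure.fst_restrict_prod_univ _ hS]

lemma snd_reroutedPlan [IsFiniteMeasure γ] (hS : MeasurableSet S) (hT : MeasurableSet T)
    (hST : Disjoint S T) (hfst : γ.fst (S ∪ T)ᶜ = 0) (hbal : γ (S ×ˢ T) = γ (T ×ˢ S)) :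
    (reroutedPlan γ S T).snd = γ.snd.restrict S := by
  rw [reroutedPlan, Measure.snd_add, Measure.snd_smul, Measure.snd_prod_eq_smul,
    Measure.fst_univ, Measure.restrict_apply_univ,
    Measure.inv_smul_smul_of_measure_univ
      (by rw [Measure.snd_univ, Measure.restrict_apply_univ, hbal]) (measure_ne_top _ _),
    ← Measure.snd_add, ← restrict_univ_prod_eq_add hS hT hST hfst,
    Measure.snd_restrict_univ_prod _ hS]

lemma lintegral_reroutedPlan_le [IsFiniteMeasure γ] (hS : MeasurableSet S) (hT : MeasurableSet T)
    (hbal : γ (S ×ˢ T) = γ (T ×ˢ S)) {c : α × α → ℝ≥0∞} {C : ℝ≥0∞}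
    (hin : ∀ x ∈ S, ∀ y ∈ S, c (x, y) ≤ C) (hcross : ∀ x ∈ S, ∀ y ∈ T, C ≤ c (x, y)) :
    ∫⁻ p, c p ∂reroutedPlan γ S T ≤ ∫⁻ p in S ×ˢ S, c p ∂γ + ∫⁻ p in S ×ˢ T, c p ∂γ := by
  set m := γ (S ×ˢ T)
  set A := (γ.restrict (S ×ˢ T)).fst
  set B := (γ.restrict (T ×ˢ S)).snd
  have hA : ∀ᵐ x ∂A, x ∈ S := (ae_map_iff measurable_fst.aemeasurable hS).mpr
    ((ae_restrict_mem (hS.prod hT)).mono fun p hp ↦ hp.1)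
  have hB : ∀ᵐ y ∂B, y ∈ S := (ae_map_iff measurable_snd.aemeasurable hS).mpr
    ((ae_restrict_mem (hT.prod hS)).mono fun p hp ↦ hp.2)
  have hprod : ∫⁻ p, c p ∂A.prod B ≤ C * (m * m) := calc
    ∫⁻ p, c p ∂A.prod B ≤ ∫⁻ _, C ∂A.prod B := lintegral_mono_ae <|
        ((Measure.quasiMeasurePreserving_fst.ae hA).and
          (Measure.quasiMeasurePreserving_snd.ae hB)).mono fun p hp ↦ hin _ hp.1 _ hp.2
    _ = C * (m * m) := by
        rw [lintegral_const, ← univ_prod_univ, Measure.prod_prod, Measure.fst_univ,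
          Measure.snd_univ, Measure.restrict_apply_univ, Measure.restrict_apply_univ, ← hbal]
  have hcost : C * m ≤ ∫⁻ p in S ×ˢ T, c p ∂γ := by
    rw [← setLIntegral_const]
    exact setLIntegral_mono' (hS.prod hT) fun p hp ↦ hcross _ hp.1 _ hp.2
  rw [reroutedPlan, lintegral_add_measure, lintegral_smul_measure]
  gcongr
  calc m⁻¹ * ∫⁻ p, c p ∂A.prod B ≤ m⁻¹ * (C * (m * m)) := by gcongr
    _ = C * m * (m⁻¹ * m) := by ring
    _ ≤ C * m := mul_le_of_le_one_right' (ENNReal.inv_mul_le_one m)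
    _ ≤ _ := hcost

lemma lintegral_restrict_prod_add_le (hS : MeasurableSet S) (hT : MeasurableSet T)
    (hST : Disjoint S T) (hsnd : γ.snd (S ∪ T)ᶜ = 0) (c : α × α → ℝ≥0∞) :
    (∫⁻ p in S ×ˢ S, c p ∂γ + ∫⁻ p in S ×ˢ T, c p ∂γ) +
      (∫⁻ p in T ×ˢ T, c p ∂γ + ∫⁻ p in T ×ˢ S, c p ∂γ) ≤ ∫⁻ p, c p ∂γ := by
  rw [← lintegral_add_measure, ← lintegral_add_measure, ← restrict_prod_univ_eq_add hS hT hST hsnd,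
    ← restrict_prod_univ_eq_add hT hS hST.symm (union_comm S T ▸ hsnd),
    ← lintegral_union (hT.prod MeasurableSet.univ) (disjoint_prod.mpr (Or.inl hST))]
  exact setLIntegral_le_lintegral _ _

end Reroute

namespace AddCircle

variable {p : ℝ}

lemma norm_coe_le_abs (x : ℝ) : ‖(x : AddCircle p)‖ ≤ |x| :=
  QuotientAddGroup.norm_mk_le_norm

lemma le_norm_coe_of_le_abs (hp : 0 < p) {x r : ℝ} (h₁ : r ≤ |x|) (h₂ : |x| ≤ p - r) :
    r ≤ ‖(x : AddCircle p)‖ := by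
  rw [AddCircle.norm_eq p]
  obtain ⟨hx₁, hx₂⟩ := abs_le.mp h₂
  rcases lt_trichotomy (round (p⁻¹ * x)) 0 with hk | hk | hk
  · have : (round (p⁻¹ * x) : ℝ) ≤ -1 := by exact_mod_cast Int.le_sub_one_of_lt hk
    refine le_abs.mpr (Or.inl ?_)
    nlinarith
  · simpa [hk] using h₁
  · have : (1 : ℝ) ≤ round (p⁻¹ * x) := by exact_mod_cast hk
    refine le_abs.mpr (Or.inr ?_)
    nlinarith

lemma dist_le_of_mem_image_Ioo {a b : ℝ} {x y : AddCircle p}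
    (hx : x ∈ ((↑) : ℝ → AddCircle p) '' Ioo a b) (hy : y ∈ ((↑) : ℝ → AddCircle p) '' Ioo a b) :
    dist x y ≤ b - a := by
  obtain ⟨u, ⟨hua, hub⟩, rfl⟩ := hx
  obtain ⟨v, ⟨hva, hvb⟩, rfl⟩ := hy
  rw [dist_eq_norm, ← coe_sub]
  exact (norm_coe_le_abs _).trans (abs_le.mpr ⟨by linarith, by linarith⟩)

end AddCircle

local notation "𝕋" => AddCircle (2*Real.pi)

lemma measurableSet_Tplus : MeasurableSet Tplus :=
  (QuotientAddGroup.isOpenMap_coe _ isOpen_Ioo).measurableSet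

lemma measurableSet_Tminus : MeasurableSet Tminus :=
  (QuotientAddGroup.isOpenMap_coe _ isOpen_Ioo).measurableSet

lemma edist_le_of_mem_Tplus {x y : 𝕋} (hx : x ∈ Tplus) (hy : y ∈ Tplus) :
    edist x y ≤ ENNReal.ofReal (Real.pi / 2) := by
  rw [edist_dist]
  exact ENNReal.ofReal_le_ofReal ((AddCircle.dist_le_of_mem_image_Ioo hx hy).trans_eq (by ring))

lemma edist_le_of_mem_Tminus {x y : 𝕋} (hx : x ∈ Tminus) (hy : y ∈ Tminus) :
    edist x y ≤ ENNReal.ofReal (Real.pi / 2) := by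
  rw [edist_dist]
  exact ENNReal.ofReal_le_ofReal ((AddCircle.dist_le_of_mem_image_Ioo hx hy).trans_eq (by ring))

lemma pi_div_two_le_dist_of_mem_Tplus_of_mem_Tminus {x y : 𝕋} (hx : x ∈ Tplus)
    (hy : y ∈ Tminus) : Real.pi / 2 ≤ dist x y := by
  obtain ⟨u, ⟨hu₁, hu₂⟩, rfl⟩ := hx
  obtain ⟨v, ⟨hv₁, hv₂⟩, rfl⟩ := hy
  rw [dist_eq_norm, ← AddCircle.coe_sub]
  exact AddCircle.le_norm_coe_of_le_abs (by positivity)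
    (le_abs.mpr (Or.inl (by linarith))) (abs_le.mpr ⟨by linarith, by linarith⟩)

lemma le_edist_of_mem_Tplus_of_mem_Tminus {x y : 𝕋} (hx : x ∈ Tplus) (hy : y ∈ Tminus) :
    ENNReal.ofReal (Real.pi / 2) ≤ edist x y := by
  rw [edist_dist]
  exact ENNReal.ofReal_le_ofReal (pi_div_two_le_dist_of_mem_Tplus_of_mem_Tminus hx hy)

lemma disjoint_Tplus_Tminus : Disjoint Tplus Tminus :=
  disjoint_left.mpr fun x hxS hxT ↦ by
    have := pi_div_two_le_dist_of_mem_Tplus_of_mem_Tminus hxS hxT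
    rw [dist_self] at this
    linarith [Real.pi_pos]

lemma W2sq_le_lintegral {μ ν : Measure 𝕋} (γ : Measure (𝕋 × 𝕋)) (hμ : γ.fst = μ)
    (hν : γ.snd = ν) : W2sq μ ν ≤ ∫⁻ p, edist p.1 p.2 ^ 2 ∂γ :=
  iInf_le_of_le γ <| iInf_le_of_le hμ <| iInf_le _ hν

lemma W2sq_add_le (μ₁ μ₂ ν₁ ν₂ : Measure 𝕋) :
    W2sq (μ₁ + μ₂) (ν₁ + ν₂) ≤ W2sq μ₁ ν₁ + W2sq μ₂ ν₂ := by
  simp only [W2sq, ENNReal.iInf_add, ENNReal.add_iInf]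
  refine le_iInf₂ fun γ₁ h₁ ↦ le_iInf fun h₁' ↦ le_iInf₂ fun γ₂ h₂ ↦ le_iInf fun h₂' ↦ ?_
  rw [← lintegral_add_measure]
  exact W2sq_le_lintegral _ (by rw [Measure.fst_add, h₁, h₂]) (by rw [Measure.snd_add, h₁', h₂'])

lemma W2sq_restrict_add_restrict_le {μ ν : Measure 𝕋} [IsFiniteMeasure μ] {S T : Set 𝕋}
    (hS : MeasurableSet S) (hT : MeasurableSet T) (hST : Disjoint S T)
    (hμ : μ (S ∪ T)ᶜ = 0) (hν : ν (S ∪ T)ᶜ = 0) (hμν : μ S = ν S) {r : ℝ≥0∞}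
    (hSr : ∀ x ∈ S, ∀ y ∈ S, edist x y ≤ r) (hTr : ∀ x ∈ T, ∀ y ∈ T, edist x y ≤ r)
    (hSTr : ∀ x ∈ S, ∀ y ∈ T, r ≤ edist x y) :
    W2sq (μ.restrict S) (ν.restrict S) + W2sq (μ.restrict T) (ν.restrict T) ≤ W2sq μ ν := by
  refine le_iInf₂ fun γ hγμ ↦ le_iInf fun hγν ↦ ?_
  have : IsFiniteMeasure γ := ⟨by rw [← Measure.fst_univ, hγμ]; exact measure_lt_top _ _⟩
  subst hγμ hγν
  have hbal := measure_prod_eq_of_fst_eq_snd hS hT hST hμ hν hμν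
  have hμ' : γ.fst (T ∪ S)ᶜ = 0 := union_comm S T ▸ hμ
  have hν' : γ.snd (T ∪ S)ᶜ = 0 := union_comm S T ▸ hν
  calc _ ≤ ∫⁻ p, edist p.1 p.2 ^ 2 ∂reroutedPlan γ S T
        + ∫⁻ p, edist p.1 p.2 ^ 2 ∂reroutedPlan γ T S :=
        add_le_add
          (W2sq_le_lintegral _ (fst_reroutedPlan hS hT hST hν hbal)
            (snd_reroutedPlan hS hT hST hμ hbal))
          (W2sq_le_lintegral _ (fst_reroutedPlan hT hS hST.symm hν' hbal.symm)
            (snd_reroutedPlan hT hS hST.symm hμ' hbal.symm))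
    _ ≤ _ := add_le_add
        (lintegral_reroutedPlan_le hS hT hbal (fun x hx y hy ↦ pow_le_pow_left' (hSr x hx y hy) 2)
          (fun x hx y hy ↦ pow_le_pow_left' (hSTr x hx y hy) 2))
        (lintegral_reroutedPlan_le hT hS hbal.symm
          (fun x hx y hy ↦ pow_le_pow_left' (hTr x hx y hy) 2)
          (fun x hx y hy ↦ edist_comm y x ▸ pow_le_pow_left' (hSTr y hy x hx) 2))
    _ ≤ _ := lintegral_restrict_prod_add_le hS hT hST hν _

theorem stmt_7_general (f g : Measure (AddCircle (2*Real.pi)))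
    [IsProbabilityMeasure f]
    (hf_supp : f (Tplus ∪ Tminus)ᶜ = 0) (hg_supp : g (Tplus ∪ Tminus)ᶜ = 0)
    (hplus : f Tplus = g Tplus) :
    W2sq f g = W2sq (f.restrict Tplus) (g.restrict Tplus)
      + W2sq (f.restrict Tminus) (g.restrict Tminus) := by
  refine le_antisymm ?_ <| W2sq_restrict_add_restrict_le measurableSet_Tplus measurableSet_Tminus
    disjoint_Tplus_Tminus hf_supp hg_supp hplus (fun _ hx _ hy ↦ edist_le_of_mem_Tplus hx hy)
    (fun _ hx _ hy ↦ edist_le_of_mem_Tminus hx hy)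
    (fun _ hx _ hy ↦ le_edist_of_mem_Tplus_of_mem_Tminus hx hy)
  calc W2sq f g = W2sq (f.restrict Tplus + f.restrict Tminus)
        (g.restrict Tplus + g.restrict Tminus) := by
        rw [Measure.restrict_add_restrict_of_measure_compl_union disjoint_Tplus_Tminus
            measurableSet_Tminus hf_supp,
          Measure.restrict_add_restrict_of_measure_compl_union disjoint_Tplus_Tminus
            measurableSet_Tminus hg_supp]
    _ ≤ _ := W2sq_add_le _ _ _ _

theorem stmt_7 (f g : Measure (AddCircle (2*Real.pi)))
    [IsProbabilityMeasure f] [IsProbabilityMeasure g]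
    (hf_supp : f (Tplus ∪ Tminus)ᶜ = 0) (hg_supp : g (Tplus ∪ Tminus)ᶜ = 0)
    (hplus : f Tplus = g Tplus) (hminus : f Tminus = g Tminus) :
    W2sq f g = W2sq (f.restrict Tplus) (g.restrict Tplus)
      + W2sq (f.restrict Tminus) (g.restrict Tminus) :=
  stmt_7_general f g hf_supp hg_supp hplus
end
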